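/- arXiv:2603.07995 — 8 statements merged into one kernel-verified Lean document; each statement's English description precedes it below -/
import Mathlib

section
/- Let f, g be probability density functions on ℝ, both positive on a common open interval Ω and zero outside its closure. Let α, β, γ ∈ ℝ \ {1} satisfy (α−β)(α−γ) = (α−1)². If α > β, then R_α[f] + D_β[f‖g] ≤ H_γ[f;g], where R_α[f] = (1−α)⁻¹ log ∫ f^α, D_β[f‖g] = (β−1)⁻¹ log ∫ f^β g^{1−β}, and H_γ[f;g] = (1−γ)⁻¹ log ∫ f g^{γ−1} (assuming all integrals are finite and positive). -/
open MeasureTheory Real Set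
open scoped ENNReal

lemma holder_aux {X : Type*} [MeasurableSpace X] {μ : Measure X} {u v w : X → ℝ} {θ : ℝ}
    (hθ : 0 < θ) (hθ1 : θ < 1)
    (hu : Integrable u μ) (hv : Integrable v μ) (hw : Integrable w μ)
    (hu0 : 0 ≤ᵐ[μ] u) (hv0 : 0 ≤ᵐ[μ] v)
    (hw_eq : w =ᵐ[μ] fun x => u x ^ θ * v x ^ (1 - θ)) :
    ∫ x, w x ∂μ ≤ (∫ x, u x ∂μ) ^ θ * (∫ x, v x ∂μ) ^ (1 - θ) := by
  have hθ1' : 0 < 1 - θ := by linarith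
  have hw0 : 0 ≤ᵐ[μ] w := by
    filter_upwards [hw_eq, hu0, hv0] with x hx hux hvx
    rw [hx]
    exact mul_nonneg (Real.rpow_nonneg hux θ) (Real.rpow_nonneg hvx (1 - θ))
  set U : X → ℝ≥0∞ := fun x => ENNReal.ofReal (u x) with hU
  set V : X → ℝ≥0∞ := fun x => ENNReal.ofReal (v x) with hV
  have hUm : AEMeasurable U μ := ENNReal.measurable_ofReal.comp_aemeasurable hu.aemeasurable
  have hVm : AEMeasurable V μ := ENNReal.measurable_ofReal.comp_aemeasurable hv.aemeasurable
  have hpq : (1/θ).HolderConjugate (1/(1-θ)) := by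
    rw [Real.holderConjugate_iff]
    constructor
    · rw [lt_div_iff₀ hθ]; linarith
    · field_simp; ring
  have key := ENNReal.lintegral_mul_le_Lp_mul_Lq μ hpq
    (f := fun x => U x ^ θ) (g := fun x => V x ^ (1-θ))
    (hUm.pow_const θ) (hVm.pow_const (1-θ))
  have e1 : ∀ x : X, (U x ^ θ) ^ (1/θ) = U x := by
    intro x
    rw [← ENNReal.rpow_mul, mul_one_div_cancel hθ.ne', ENNReal.rpow_one]
  have e2 : ∀ x : X, (V x ^ (1-θ)) ^ (1/(1-θ)) = V x := by
    intro x
    rw [← ENNReal.rpow_mul, mul_one_div_cancel hθ1'.ne', ENNReal.rpow_one]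
  simp only [Pi.mul_apply, e1, e2, one_div_one_div] at key
  have hWeq : ∫⁻ x, ENNReal.ofReal (w x) ∂μ = ∫⁻ x, U x ^ θ * V x ^ (1-θ) ∂μ := by
    refine lintegral_congr_ae ?_
    filter_upwards [hw_eq, hu0, hv0] with x hx hux hvx
    rw [hx, ENNReal.ofReal_mul (Real.rpow_nonneg hux θ),
      ENNReal.ofReal_rpow_of_nonneg hux hθ.le,
      ENNReal.ofReal_rpow_of_nonneg hvx hθ1'.le]
  have hUint : ∫⁻ x, U x ∂μ = ENNReal.ofReal (∫ x, u x ∂μ) :=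
    (ofReal_integral_eq_lintegral_ofReal hu hu0).symm
  have hVint : ∫⁻ x, V x ∂μ = ENNReal.ofReal (∫ x, v x ∂μ) :=
    (ofReal_integral_eq_lintegral_ofReal hv hv0).symm
  have hWint : ∫⁻ x, ENNReal.ofReal (w x) ∂μ = ENNReal.ofReal (∫ x, w x ∂μ) :=
    (ofReal_integral_eq_lintegral_ofReal hw hw0).symm
  rw [hWeq.symm, hWint, hUint, hVint] at key
  have hIu : 0 ≤ ∫ x, u x ∂μ := integral_nonneg_of_ae hu0
  have hIv : 0 ≤ ∫ x, v x ∂μ := integral_nonneg_of_ae hv0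
  have hfin : ENNReal.ofReal (∫ x, u x ∂μ) ^ θ * ENNReal.ofReal (∫ x, v x ∂μ) ^ (1-θ) ≠ ⊤ := by
    apply ENNReal.mul_ne_top <;>
      exact ENNReal.rpow_ne_top_of_nonneg (by linarith) ENNReal.ofReal_ne_top
  have := ENNReal.toReal_mono hfin key
  rwa [ENNReal.toReal_ofReal (integral_nonneg_of_ae hw0), ENNReal.toReal_mul,
    ← ENNReal.toReal_rpow, ← ENNReal.toReal_rpow, ENNReal.toReal_ofReal hIu,
    ENNReal.toReal_ofReal hIv] at this

lemma rpow_comb {x y : ℝ} (hx : 0 < x) (hy : 0 < y) (p q r s t : ℝ) :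
    (x ^ p * y ^ q) ^ t * (x ^ r * y ^ s) ^ (1 - t)
      = x ^ (p*t + r*(1-t)) * y ^ (q*t + s*(1-t)) := by
  rw [Real.mul_rpow (Real.rpow_nonneg hx.le p) (Real.rpow_nonneg hy.le q),
    Real.mul_rpow (Real.rpow_nonneg hx.le r) (Real.rpow_nonneg hy.le s),
    ← Real.rpow_mul hx.le, ← Real.rpow_mul hy.le, ← Real.rpow_mul hx.le,
    ← Real.rpow_mul hy.le, Real.rpow_add hx, Real.rpow_add hy]
  ring

/-- Main Rényi entropy–divergence–cross-entropy inequality (Theorem 2.1, case α > β). -/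
theorem renyi_entropy_divergence_cross_entropy_ineq
    (c d α β γ : ℝ) (f g : ℝ → ℝ)
    (hcd : c < d)
    (hfpos : ∀ x ∈ Ioo c d, 0 < f x) (hgpos : ∀ x ∈ Ioo c d, 0 < g x)
    (hfsupp : ∀ x ∉ closure (Ioo c d), f x = 0)
    (hgsupp : ∀ x ∉ closure (Ioo c d), g x = 0)
    (hfdens : (∫ x in Ioo c d, f x) = 1) (hgdens : (∫ x in Ioo c d, g x) = 1)
    (hα : α ≠ 1) (hβ : β ≠ 1) (hγ : γ ≠ 1)
    (hrel : (α - β) * (α - γ) = (α - 1) ^ 2) (hαβ : α > β)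
    (hA : IntegrableOn (fun x => f x ^ α) (Ioo c d))
    (hApos : 0 < ∫ x in Ioo c d, f x ^ α)
    (hB : IntegrableOn (fun x => f x ^ β * g x ^ (1 - β)) (Ioo c d))
    (hBpos : 0 < ∫ x in Ioo c d, f x ^ β * g x ^ (1 - β))
    (hC : IntegrableOn (fun x => f x * g x ^ (γ - 1)) (Ioo c d))
    (hCpos : 0 < ∫ x in Ioo c d, f x * g x ^ (γ - 1)) :
    (1 - α)⁻¹ * log (∫ x in Ioo c d, f x ^ α)
      + (β - 1)⁻¹ * log (∫ x in Ioo c d, f x ^ β * g x ^ (1 - β))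
      ≤ (1 - γ)⁻¹ * log (∫ x in Ioo c d, f x * g x ^ (γ - 1)) := by
  have hk : (0:ℝ) < α - β := by linarith
  have hγeq : (1 - γ) * (α - β) = (α - 1) * (β - 1) := by linear_combination hrel
  have hγ1 : 1 - γ ≠ 0 := fun h => hγ (by linarith [sub_eq_zero.mp h])
  have hkne : α - β ≠ 0 := hk.ne'
  have ha1 : α - 1 ≠ 0 := sub_ne_zero.mpr hα
  have hb1 : β - 1 ≠ 0 := sub_ne_zero.mpr hβ
  have h1a : 1 - α ≠ 0 := fun h => hα (by linarith [sub_eq_zero.mp h])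
  have h1b : 1 - β ≠ 0 := fun h => hβ (by linarith [sub_eq_zero.mp h])
  have hγm1 : γ - 1 = (α-1)*(1-β)/(α-β) := by
    rw [eq_div_iff hkne]; linear_combination -hγeq
  have h1γ : 1 - γ = (α-1)*(β-1)/(α-β) := by
    rw [eq_div_iff hkne]; linear_combination hγeq
  have hmem : ∀ᵐ x ∂(volume.restrict (Ioo c d)), x ∈ Ioo c d :=
    ae_restrict_mem measurableSet_Ioo
  have hA0 : 0 ≤ᵐ[volume.restrict (Ioo c d)] fun x => f x ^ α := by
    filter_upwards [hmem] with x hx; exact Real.rpow_nonneg (hfpos x hx).le α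
  have hB0 : 0 ≤ᵐ[volume.restrict (Ioo c d)] fun x => f x ^ β * g x ^ (1-β) := by
    filter_upwards [hmem] with x hx
    exact mul_nonneg (Real.rpow_nonneg (hfpos x hx).le β)
      (Real.rpow_nonneg (hgpos x hx).le (1-β))
  have hC0 : 0 ≤ᵐ[volume.restrict (Ioo c d)] fun x => f x * g x ^ (γ-1) := by
    filter_upwards [hmem] with x hx
    exact mul_nonneg (hfpos x hx).le (Real.rpow_nonneg (hgpos x hx).le (γ-1))
  set LA := log (∫ x in Ioo c d, f x ^ α) with hLA
  set LB := log (∫ x in Ioo c d, f x ^ β * g x ^ (1-β)) with hLB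
  set LC := log (∫ x in Ioo c d, f x * g x ^ (γ-1)) with hLC
  rcases lt_trichotomy α 1 with hα1 | hα1 | hα1
  · -- Case 3 : β < α < 1, θ = (α-β)/(1-β) ∈ (0,1), A ≤ C^θ B^(1-θ)
    have hb1 : β < 1 := by linarith
    set θ : ℝ := (α-β)/(1-β) with hθdef
    have hθ0 : 0 < θ := div_pos hk (by linarith)
    have hθ1 : θ < 1 := (div_lt_one (by linarith)).mpr (by linarith)
    have hw_eq : (fun x => f x ^ α) =ᵐ[volume.restrict (Ioo c d)]
        (fun x => (f x * g x ^ (γ-1)) ^ θ * (f x ^ β * g x ^ (1-β)) ^ (1-θ)) := by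
      filter_upwards [hmem] with x hx
      have hfx := hfpos x hx; have hgx := hgpos x hx
      have h := rpow_comb hfx hgx 1 (γ-1) β (1-β) θ
      rw [Real.rpow_one] at h
      rw [h]
      have e1 : 1*θ + β*(1-θ) = α := by
        rw [hθdef]; field_simp [h1b] <;> (first | ring1 | (ring_nf; try tauto) | tauto)
      have e2 : (γ-1)*θ + (1-β)*(1-θ) = 0 := by
        rw [hθdef, hγm1]; field_simp [h1b, hkne] <;> (first | ring1 | (ring_nf; try tauto) | tauto)
      rw [e1, e2, Real.rpow_zero, mul_one]
    have key := holder_aux hθ0 hθ1 hC hB hA hC0 hB0 hw_eq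
    have hlog : LA ≤ θ * LC + (1-θ) * LB := by
      have h2 := (Real.log_le_log_iff hApos
        (mul_pos (Real.rpow_pos_of_pos hCpos θ) (Real.rpow_pos_of_pos hBpos (1-θ)))).mpr key
      rwa [Real.log_mul (Real.rpow_pos_of_pos hCpos θ).ne'
        (Real.rpow_pos_of_pos hBpos (1-θ)).ne', Real.log_rpow hCpos,
        Real.log_rpow hBpos] at h2
    have c1 : (1-α)⁻¹ * θ = (1-γ)⁻¹ := by
      rw [hθdef, h1γ, inv_div]; field_simp [h1a, ha1, hb1] <;> (first | ring1 | (ring_nf; try tauto) | tauto)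
    have c2 : (1-α)⁻¹ * (1-θ) = -(β-1)⁻¹ := by
      rw [hθdef]; field_simp [h1a, h1b, hb1] <;> (first | ring1 | (ring_nf; try tauto) | tauto)
    have step : (1-α)⁻¹ * LA ≤ (1-α)⁻¹ * (θ * LC + (1-θ) * LB) := by
      apply mul_le_mul_of_nonneg_left hlog
      rw [inv_nonneg]; linarith
    have expand : (1-α)⁻¹ * (θ * LC + (1-θ) * LB)
        = (1-γ)⁻¹ * LC + (-(β-1)⁻¹) * LB := by
      rw [mul_add, ← mul_assoc, ← mul_assoc, c1, c2]
    linarith [step, expand.symm.le]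
  · exact absurd hα1 hα
  · rcases lt_trichotomy β 1 with hb1 | hb1 | hb1
    · -- Case 1 : β < 1 < α, θ = (1-β)/(α-β) ∈ (0,1), C ≤ A^θ B^(1-θ)
      set θ : ℝ := (1-β)/(α-β) with hθdef
      have hθ0 : 0 < θ := div_pos (by linarith) hk
      have hθ1 : θ < 1 := (div_lt_one hk).mpr (by linarith)
      have hw_eq : (fun x => f x * g x ^ (γ-1)) =ᵐ[volume.restrict (Ioo c d)]
          (fun x => (f x ^ α) ^ θ * (f x ^ β * g x ^ (1-β)) ^ (1-θ)) := by
        filter_upwards [hmem] with x hx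
        have hfx := hfpos x hx; have hgx := hgpos x hx
        have h := rpow_comb hfx hgx α 0 β (1-β) θ
        rw [Real.rpow_zero, mul_one] at h
        rw [h]
        have e1 : α*θ + β*(1-θ) = 1 := by
          rw [hθdef]; field_simp <;> (first | ring1 | (ring_nf; try tauto) | tauto)
        have e2 : 0*θ + (1-β)*(1-θ) = γ-1 := by
          rw [hθdef, hγm1]; field_simp <;> (first | ring1 | (ring_nf; try tauto) | tauto)
        rw [e1, e2, Real.rpow_one]
      have key := holder_aux hθ0 hθ1 hA hB hC hA0 hB0 hw_eq
      have hlog : LC ≤ θ * LA + (1-θ) * LB := by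
        have h2 := (Real.log_le_log_iff hCpos
          (mul_pos (Real.rpow_pos_of_pos hApos θ) (Real.rpow_pos_of_pos hBpos (1-θ)))).mpr key
        rwa [Real.log_mul (Real.rpow_pos_of_pos hApos θ).ne'
          (Real.rpow_pos_of_pos hBpos (1-θ)).ne', Real.log_rpow hApos,
          Real.log_rpow hBpos] at h2
      have hγneg : (1-γ) < 0 := by
        nlinarith [hγeq]
      have step : (1-γ)⁻¹ * (θ * LA + (1-θ) * LB) ≤ (1-γ)⁻¹ * LC := by
        apply mul_le_mul_of_nonpos_left hlog
        rw [inv_nonpos]; linarith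
      have c1 : (1-γ)⁻¹ * θ = (1-α)⁻¹ := by
        rw [hθdef, h1γ]; field_simp [ha1, hb1, h1a] <;> (first | ring1 | (ring_nf; try tauto) | tauto)
      have c2 : (1-γ)⁻¹ * (1-θ) = (β-1)⁻¹ := by
        rw [hθdef, h1γ]; field_simp [ha1, hb1] <;> (first | ring1 | (ring_nf; try tauto) | tauto)
      have expand : (1-γ)⁻¹ * (θ * LA + (1-θ) * LB)
          = (1-α)⁻¹ * LA + (β-1)⁻¹ * LB := by
        rw [mul_add, ← mul_assoc, ← mul_assoc, c1, c2]
      linarith [step, expand.symm.le]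
    · exact absurd hb1 hβ
    · -- Case 2 : 1 < β < α, θ = (α-β)/(α-1) ∈ (0,1), B ≤ C^θ A^(1-θ)
      set θ : ℝ := (α-β)/(α-1) with hθdef
      have hθ0 : 0 < θ := div_pos hk (by linarith)
      have hθ1 : θ < 1 := (div_lt_one (by linarith)).mpr (by linarith)
      have hw_eq : (fun x => f x ^ β * g x ^ (1-β)) =ᵐ[volume.restrict (Ioo c d)]
          (fun x => (f x * g x ^ (γ-1)) ^ θ * (f x ^ α) ^ (1-θ)) := by
        filter_upwards [hmem] with x hx
        have hfx := hfpos x hx; have hgx := hgpos x hx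
        have h := rpow_comb hfx hgx 1 (γ-1) α 0 θ
        rw [Real.rpow_one, Real.rpow_zero, mul_one] at h
        rw [h]
        have e1 : 1*θ + α*(1-θ) = β := by
          rw [hθdef]; field_simp [ha1] <;> (first | ring1 | (ring_nf; try tauto) | tauto)
        have e2 : (γ-1)*θ + 0*(1-θ) = 1-β := by
          rw [hθdef, hγm1]; field_simp [ha1, hkne] <;> (first | ring1 | (ring_nf; try tauto) | tauto)
        rw [e1, e2]
      have key := holder_aux hθ0 hθ1 hC hA hB hC0 hA0 hw_eq
      have hlog : LB ≤ θ * LC + (1-θ) * LA := by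
        have h2 := (Real.log_le_log_iff hBpos
          (mul_pos (Real.rpow_pos_of_pos hCpos θ) (Real.rpow_pos_of_pos hApos (1-θ)))).mpr key
        rwa [Real.log_mul (Real.rpow_pos_of_pos hCpos θ).ne'
          (Real.rpow_pos_of_pos hApos (1-θ)).ne', Real.log_rpow hCpos,
          Real.log_rpow hApos] at h2
      have step : (β-1)⁻¹ * LB ≤ (β-1)⁻¹ * (θ * LC + (1-θ) * LA) := by
        apply mul_le_mul_of_nonneg_left hlog
        rw [inv_nonneg]; linarith
      have c1 : (β-1)⁻¹ * θ = (1-γ)⁻¹ := by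
        rw [hθdef, h1γ]; field_simp [ha1, hb1] <;> (first | ring1 | (ring_nf; try tauto) | tauto)
      have c2 : (β-1)⁻¹ * (1-θ) = -(1-α)⁻¹ := by
        rw [hθdef]; field_simp [ha1, hb1, h1a] <;> (first | ring1 | (ring_nf; try tauto) | tauto)
      have expand : (β-1)⁻¹ * (θ * LC + (1-θ) * LA)
          = (1-γ)⁻¹ * LC + (-(1-α)⁻¹) * LA := by
        rw [mul_add, ← mul_assoc, ← mul_assoc, c1, c2]
      linarith [step, expand.symm.le]
end

section
/- Under the hypotheses of the main Rényi inequality, if α < β then the inequality is reversed: R_α[f] + D_β[f‖g] ≥ H_γ[f;g], where α, β, γ ≠ 1 satisfy (α−β)(α−γ) = (α−1)². -/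
open MeasureTheory Real Set

/-- Geometric-mean form of Hölder's inequality for nonnegative integrable functions. -/
lemma holder_geom_aux {μ : Measure ℝ} {u v : ℝ → ℝ} (hu : Integrable u μ)
    (hv : Integrable v μ) (hu0 : 0 ≤ᵐ[μ] u) (hv0 : 0 ≤ᵐ[μ] v)
    (hA : 0 < ∫ x, u x ∂μ) (hB : 0 < ∫ x, v x ∂μ)
    {t : ℝ} (ht0 : 0 < t) (ht1 : t < 1) :
    ∫ x, u x ^ t * v x ^ (1 - t) ∂μ ≤ (∫ x, u x ∂μ) ^ t * (∫ x, v x ∂μ) ^ (1 - t) := by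
  set A := ∫ x, u x ∂μ with hAdef
  set B := ∫ x, v x ∂μ with hBdef
  have hADB : (0:ℝ) < A ^ t * B ^ (1 - t) := by positivity
  have key : ∀ᵐ x ∂μ, u x ^ t * v x ^ (1 - t) ≤
      A ^ t * B ^ (1 - t) * (t * (u x / A) + (1 - t) * (v x / B)) := by
    filter_upwards [hu0, hv0] with x hux hvx
    have hy := Real.geom_mean_le_arith_mean2_weighted ht0.le (by linarith : (0:ℝ) ≤ 1 - t)
      (div_nonneg hux hA.le) (div_nonneg hvx hB.le) (by ring : t + (1 - t) = 1)
    have heq : u x ^ t * v x ^ (1 - t) =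
        A ^ t * B ^ (1 - t) * ((u x / A) ^ t * (v x / B) ^ (1 - t)) := by
      rw [Real.div_rpow hux hA.le, Real.div_rpow hvx hB.le]
      field_simp
    rw [heq]
    exact mul_le_mul_of_nonneg_left hy hADB.le
  have hint : Integrable (fun x => A ^ t * B ^ (1 - t) *
      (t * (u x / A) + (1 - t) * (v x / B))) μ :=
    (((hu.div_const A).const_mul t).add ((hv.div_const B).const_mul (1 - t))).const_mul _
  have h0 : 0 ≤ᵐ[μ] fun x => u x ^ t * v x ^ (1 - t) := by
    filter_upwards [hu0, hv0] with x hux hvx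
    exact mul_nonneg (Real.rpow_nonneg hux _) (Real.rpow_nonneg hvx _)
  calc ∫ x, u x ^ t * v x ^ (1 - t) ∂μ
      ≤ ∫ x, A ^ t * B ^ (1 - t) * (t * (u x / A) + (1 - t) * (v x / B)) ∂μ :=
        integral_mono_of_nonneg h0 hint key
    _ = A ^ t * B ^ (1 - t) * (t * (A / A) + (1 - t) * (B / B)) := by
        rw [integral_const_mul, integral_add ((hu.div_const A).const_mul t)
          ((hv.div_const B).const_mul (1 - t)), integral_const_mul, integral_const_mul,
          integral_div, integral_div]
    _ = A ^ t * B ^ (1 - t) := by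
        rw [div_self hA.ne', div_self hB.ne']; ring

/-- Combining two positive-base rpow products. -/
lemma rpow_combo {F G : ℝ} (hF : 0 < F) (hG : 0 < G) {a b c d s t e₁ e₂ : ℝ}
    (h1 : a * s + c * t = e₁) (h2 : b * s + d * t = e₂) :
    (F ^ a * G ^ b) ^ s * (F ^ c * G ^ d) ^ t = F ^ e₁ * G ^ e₂ := by
  rw [← h1, ← h2,
    Real.mul_rpow (Real.rpow_nonneg hF.le _) (Real.rpow_nonneg hG.le _),
    Real.mul_rpow (Real.rpow_nonneg hF.le _) (Real.rpow_nonneg hG.le _),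
    ← Real.rpow_mul hF.le, ← Real.rpow_mul hG.le, ← Real.rpow_mul hF.le,
    ← Real.rpow_mul hG.le, Real.rpow_add hF, Real.rpow_add hG]
  ring

/-- Main Rényi inequality, reversed case α < β. -/
theorem renyi_entropy_divergence_cross_entropy_ineq_reversed
    (c d α β γ : ℝ) (f g : ℝ → ℝ)
    (hcd : c < d)
    (hfpos : ∀ x ∈ Ioo c d, 0 < f x) (hgpos : ∀ x ∈ Ioo c d, 0 < g x)
    (hfsupp : ∀ x ∉ closure (Ioo c d), f x = 0)
    (hgsupp : ∀ x ∉ closure (Ioo c d), g x = 0)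
    (hfdens : (∫ x in Ioo c d, f x) = 1) (hgdens : (∫ x in Ioo c d, g x) = 1)
    (hα : α ≠ 1) (hβ : β ≠ 1) (hγ : γ ≠ 1)
    (hrel : (α - β) * (α - γ) = (α - 1) ^ 2) (hαβ : α < β)
    (hA : IntegrableOn (fun x => f x ^ α) (Ioo c d))
    (hApos : 0 < ∫ x in Ioo c d, f x ^ α)
    (hB : IntegrableOn (fun x => f x ^ β * g x ^ (1 - β)) (Ioo c d))
    (hBpos : 0 < ∫ x in Ioo c d, f x ^ β * g x ^ (1 - β))
    (hC : IntegrableOn (fun x => f x * g x ^ (γ - 1)) (Ioo c d))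
    (hCpos : 0 < ∫ x in Ioo c d, f x * g x ^ (γ - 1)) :
    (1 - α)⁻¹ * log (∫ x in Ioo c d, f x ^ α)
      + (β - 1)⁻¹ * log (∫ x in Ioo c d, f x ^ β * g x ^ (1 - β))
      ≥ (1 - γ)⁻¹ * log (∫ x in Ioo c d, f x * g x ^ (γ - 1)) := by
  have hβα : (0:ℝ) < β - α := by linarith
  have hγ1 : (γ - 1) * (β - α) = (1 - α) * (1 - β) := by linear_combination hrel
  have hβα' : β - α ≠ 0 := hβα.ne'
  have hγ1' : (1:ℝ) - γ ≠ 0 := sub_ne_zero.mpr (Ne.symm hγ)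
  have hα1' : (1:ℝ) - α ≠ 0 := sub_ne_zero.mpr (Ne.symm hα)
  have hβ1' : β - 1 ≠ 0 := sub_ne_zero.mpr hβ
  have hae : ∀ᵐ x ∂(volume.restrict (Ioo c d)), x ∈ Ioo c d :=
    ae_restrict_mem measurableSet_Ioo
  have hA0 : 0 ≤ᵐ[volume.restrict (Ioo c d)] fun x => f x ^ α := by
    filter_upwards [hae] with x hx using Real.rpow_nonneg (hfpos x hx).le _
  have hB0 : 0 ≤ᵐ[volume.restrict (Ioo c d)] fun x => f x ^ β * g x ^ (1 - β) := by
    filter_upwards [hae] with x hx using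
      mul_nonneg (Real.rpow_nonneg (hfpos x hx).le _) (Real.rpow_nonneg (hgpos x hx).le _)
  have hC0 : 0 ≤ᵐ[volume.restrict (Ioo c d)] fun x => f x * g x ^ (γ - 1) := by
    filter_upwards [hae] with x hx using
      mul_nonneg (hfpos x hx).le (Real.rpow_nonneg (hgpos x hx).le _)
  rcases lt_or_gt_of_ne hα with hα1 | hα1
  · rcases lt_or_gt_of_ne hβ with hβ1 | hβ1
    -- Case A : α < β < 1, use B-integrand = (C-int)^t * (A-int)^(1-t), t = (β-α)/(1-α)
    · set t : ℝ := (β - α) / (1 - α) with htdef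
      have h1α : (0:ℝ) < 1 - α := by linarith
      have ht0 : 0 < t := div_pos hβα h1α
      have ht1 : t < 1 := (div_lt_one h1α).2 (by linarith)
      have key := holder_geom_aux hC hA hC0 hA0 hCpos hApos ht0 ht1
      have hcongr : (∫ x in Ioo c d, f x ^ β * g x ^ (1 - β))
          = ∫ x in Ioo c d, (f x * g x ^ (γ - 1)) ^ t * (f x ^ α) ^ (1 - t) := by
        refine integral_congr_ae ?_
        filter_upwards [hae] with x hx
        have hF := hfpos x hx; have hG := hgpos x hx
        have e1 : 1 * t + α * (1 - t) = β := by rw [htdef]; field_simp; ring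
        have e2 : (γ - 1) * t + 0 * (1 - t) = 1 - β := by
          rw [htdef]; field_simp
          linear_combination hγ1
        calc f x ^ β * g x ^ (1 - β)
            = (f x ^ (1:ℝ) * g x ^ (γ - 1)) ^ t * (f x ^ α * g x ^ (0:ℝ)) ^ (1 - t) :=
              (rpow_combo hF hG e1 e2).symm
          _ = (f x * g x ^ (γ - 1)) ^ t * (f x ^ α) ^ (1 - t) := by
              rw [Real.rpow_one, Real.rpow_zero, mul_one]
      have hBle : (∫ x in Ioo c d, f x ^ β * g x ^ (1 - β))
          ≤ (∫ x in Ioo c d, f x * g x ^ (γ - 1)) ^ t * (∫ x in Ioo c d, f x ^ α) ^ (1 - t) := by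
        rw [hcongr]; exact key
      have hlog : log (∫ x in Ioo c d, f x ^ β * g x ^ (1 - β))
          ≤ t * log (∫ x in Ioo c d, f x * g x ^ (γ - 1))
            + (1 - t) * log (∫ x in Ioo c d, f x ^ α) := by
        calc log (∫ x in Ioo c d, f x ^ β * g x ^ (1 - β))
            ≤ log ((∫ x in Ioo c d, f x * g x ^ (γ - 1)) ^ t
                * (∫ x in Ioo c d, f x ^ α) ^ (1 - t)) := Real.log_le_log hBpos hBle
          _ = _ := by
              rw [Real.log_mul (by positivity) (by positivity),
                Real.log_rpow hCpos, Real.log_rpow hApos]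
      have c1 : (β - 1)⁻¹ * t = (1 - γ)⁻¹ := by
        rw [htdef]; field_simp
        linear_combination -hγ1
      have c2 : (β - 1)⁻¹ * (1 - t) = -(1 - α)⁻¹ := by
        rw [htdef]; field_simp
        ring
      have h2 := mul_le_mul_of_nonpos_left hlog
        (by simp only [inv_nonpos]; linarith : (β - 1)⁻¹ ≤ 0)
      have h3 : (β - 1)⁻¹ * (t * log (∫ x in Ioo c d, f x * g x ^ (γ - 1))
            + (1 - t) * log (∫ x in Ioo c d, f x ^ α))
          = (1 - γ)⁻¹ * log (∫ x in Ioo c d, f x * g x ^ (γ - 1))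
            - (1 - α)⁻¹ * log (∫ x in Ioo c d, f x ^ α) := by
        rw [mul_add, ← mul_assoc, ← mul_assoc, c1, c2]; ring
      linarith
    -- Case B : α < 1 < β, use C-integrand = (A-int)^t * (B-int)^(1-t), t = (β-1)/(β-α)
    · set t : ℝ := (β - 1) / (β - α) with htdef
      have ht0 : 0 < t := div_pos (by linarith) hβα
      have ht1 : t < 1 := (div_lt_one hβα).2 (by linarith)
      have key := holder_geom_aux hA hB hA0 hB0 hApos hBpos ht0 ht1
      have hcongr : (∫ x in Ioo c d, f x * g x ^ (γ - 1))
          = ∫ x in Ioo c d, (f x ^ α) ^ t * (f x ^ β * g x ^ (1 - β)) ^ (1 - t) := by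
        refine integral_congr_ae ?_
        filter_upwards [hae] with x hx
        have hF := hfpos x hx; have hG := hgpos x hx
        have e1 : α * t + β * (1 - t) = 1 := by rw [htdef]; field_simp; ring
        have e2 : 0 * t + (1 - β) * (1 - t) = γ - 1 := by
          rw [htdef]; field_simp
          linear_combination -hγ1
        calc f x * g x ^ (γ - 1) = f x ^ (1:ℝ) * g x ^ (γ - 1) := by rw [Real.rpow_one]
          _ = (f x ^ α * g x ^ (0:ℝ)) ^ t * (f x ^ β * g x ^ (1 - β)) ^ (1 - t) :=
              (rpow_combo hF hG e1 e2).symm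
          _ = (f x ^ α) ^ t * (f x ^ β * g x ^ (1 - β)) ^ (1 - t) := by
              rw [Real.rpow_zero, mul_one]
      have hCle : (∫ x in Ioo c d, f x * g x ^ (γ - 1))
          ≤ (∫ x in Ioo c d, f x ^ α) ^ t
            * (∫ x in Ioo c d, f x ^ β * g x ^ (1 - β)) ^ (1 - t) := by
        rw [hcongr]; exact key
      have hlog : log (∫ x in Ioo c d, f x * g x ^ (γ - 1))
          ≤ t * log (∫ x in Ioo c d, f x ^ α)
            + (1 - t) * log (∫ x in Ioo c d, f x ^ β * g x ^ (1 - β)) := by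
        calc log (∫ x in Ioo c d, f x * g x ^ (γ - 1))
            ≤ log ((∫ x in Ioo c d, f x ^ α) ^ t
                * (∫ x in Ioo c d, f x ^ β * g x ^ (1 - β)) ^ (1 - t)) :=
              Real.log_le_log hCpos hCle
          _ = _ := by
              rw [Real.log_mul (by positivity) (by positivity),
                Real.log_rpow hApos, Real.log_rpow hBpos]
      have h1γ : (0:ℝ) < 1 - γ := by nlinarith [hγ1]
      have c1 : (1 - γ)⁻¹ * t = (1 - α)⁻¹ := by
        rw [htdef]; field_simp
        linear_combination hγ1
      have c2 : (1 - γ)⁻¹ * (1 - t) = (β - 1)⁻¹ := by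
        rw [htdef]; field_simp
        linear_combination hγ1
      have h2 := mul_le_mul_of_nonneg_left hlog (inv_nonneg.2 h1γ.le)
      have h3 : (1 - γ)⁻¹ * (t * log (∫ x in Ioo c d, f x ^ α)
            + (1 - t) * log (∫ x in Ioo c d, f x ^ β * g x ^ (1 - β)))
          = (1 - α)⁻¹ * log (∫ x in Ioo c d, f x ^ α)
            + (β - 1)⁻¹ * log (∫ x in Ioo c d, f x ^ β * g x ^ (1 - β)) := by
        rw [mul_add, ← mul_assoc, ← mul_assoc, c1, c2]
      linarith
  -- Case C : 1 < α < β, use A-integrand = (C-int)^t * (B-int)^(1-t), t = (β-α)/(β-1)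
  · set t : ℝ := (β - α) / (β - 1) with htdef
    have hβgt : (1:ℝ) < β := by linarith
    have ht0 : 0 < t := div_pos hβα (by linarith)
    have ht1 : t < 1 := (div_lt_one (by linarith)).2 (by linarith)
    have key := holder_geom_aux hC hB hC0 hB0 hCpos hBpos ht0 ht1
    have hcongr : (∫ x in Ioo c d, f x ^ α)
        = ∫ x in Ioo c d, (f x * g x ^ (γ - 1)) ^ t * (f x ^ β * g x ^ (1 - β)) ^ (1 - t) := by
      refine integral_congr_ae ?_
      filter_upwards [hae] with x hx
      have hF := hfpos x hx; have hG := hgpos x hx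
      have e1 : 1 * t + β * (1 - t) = α := by rw [htdef]; field_simp; ring
      have e2 : (γ - 1) * t + (1 - β) * (1 - t) = 0 := by
        rw [htdef]; field_simp
        linear_combination hγ1
      calc f x ^ α = f x ^ α * g x ^ (0:ℝ) := by rw [Real.rpow_zero, mul_one]
        _ = (f x ^ (1:ℝ) * g x ^ (γ - 1)) ^ t * (f x ^ β * g x ^ (1 - β)) ^ (1 - t) :=
            (rpow_combo hF hG e1 e2).symm
        _ = (f x * g x ^ (γ - 1)) ^ t * (f x ^ β * g x ^ (1 - β)) ^ (1 - t) := by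
            rw [Real.rpow_one]
    have hAle : (∫ x in Ioo c d, f x ^ α)
        ≤ (∫ x in Ioo c d, f x * g x ^ (γ - 1)) ^ t
          * (∫ x in Ioo c d, f x ^ β * g x ^ (1 - β)) ^ (1 - t) := by
      rw [hcongr]; exact key
    have hlog : log (∫ x in Ioo c d, f x ^ α)
        ≤ t * log (∫ x in Ioo c d, f x * g x ^ (γ - 1))
          + (1 - t) * log (∫ x in Ioo c d, f x ^ β * g x ^ (1 - β)) := by
      calc log (∫ x in Ioo c d, f x ^ α)
          ≤ log ((∫ x in Ioo c d, f x * g x ^ (γ - 1)) ^ t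
              * (∫ x in Ioo c d, f x ^ β * g x ^ (1 - β)) ^ (1 - t)) :=
            Real.log_le_log hApos hAle
        _ = _ := by
            rw [Real.log_mul (by positivity) (by positivity),
              Real.log_rpow hCpos, Real.log_rpow hBpos]
    have c1 : (1 - α)⁻¹ * t = (1 - γ)⁻¹ := by
      rw [htdef]; field_simp
      linear_combination -hγ1
    have c2 : (1 - α)⁻¹ * (1 - t) = -(β - 1)⁻¹ := by
      rw [htdef]; field_simp
      ring
    have h2 := mul_le_mul_of_nonpos_left hlog
      (by simp only [inv_nonpos]; linarith : (1 - α)⁻¹ ≤ 0)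
    have h3 : (1 - α)⁻¹ * (t * log (∫ x in Ioo c d, f x * g x ^ (γ - 1))
          + (1 - t) * log (∫ x in Ioo c d, f x ^ β * g x ^ (1 - β)))
        = (1 - γ)⁻¹ * log (∫ x in Ioo c d, f x * g x ^ (γ - 1))
          - (β - 1)⁻¹ * log (∫ x in Ioo c d, f x ^ β * g x ^ (1 - β)) := by
      rw [mul_add, ← mul_assoc, ← mul_assoc, c1, c2]; ring
    linarith
end

section
/- Let α, β ∈ ℝ \ {1} with β < 1 < α or β < α < 1 (i.e., K = (β−α)/(1−α) satisfies K > 1 or K < 0). Then for positive probability densities f, g on a common interval: (∫ g^{(1−β)(1−α)/(β−α)} f dx)^{(β−α)/((1−α)(1−β))} · (∫ f^α dx)^{1/(1−α)} ≤ (∫ g^{1−β} f^β dx)^{1/(1−β)}, assuming all integrals are finite. -/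
open MeasureTheory Real Set

/-- Hölder-type inequality: if `w = u^θ * v^(1-θ)` pointwise on `S`, then
`∫ w ≤ (∫ u)^θ * (∫ v)^(1-θ)`. -/
lemma renyi_holder_pow_le {S : Set ℝ} (hS : MeasurableSet S)
    {u v w : ℝ → ℝ} {θ : ℝ} (hθ0 : 0 < θ) (hθ1 : θ < 1)
    (hu : IntegrableOn u S) (hv : IntegrableOn v S) (hw : IntegrableOn w S)
    (hu0 : ∀ x ∈ S, 0 ≤ u x) (hv0 : ∀ x ∈ S, 0 ≤ v x)
    (hweq : ∀ x ∈ S, w x = u x ^ θ * v x ^ (1 - θ)) :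
    (∫ x in S, w x) ≤ (∫ x in S, u x) ^ θ * (∫ x in S, v x) ^ (1 - θ) := by
  set μ := volume.restrict S with hμ
  have hu0' : 0 ≤ᵐ[μ] u := (ae_restrict_iff' hS).2 (ae_of_all _ hu0)
  have hv0' : 0 ≤ᵐ[μ] v := (ae_restrict_iff' hS).2 (ae_of_all _ hv0)
  have hweq' : ∀ᵐ x ∂μ, w x = u x ^ θ * v x ^ (1 - θ) :=
    (ae_restrict_iff' hS).2 (ae_of_all _ hweq)
  have hw0' : 0 ≤ᵐ[μ] w := by
    filter_upwards [hu0', hv0', hweq'] with x h1 h2 h3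
    rw [h3]; exact mul_nonneg (rpow_nonneg h1 _) (rpow_nonneg h2 _)
  have hiu := integral_eq_lintegral_of_nonneg_ae hu0' hu.1
  have hiv := integral_eq_lintegral_of_nonneg_ae hv0' hv.1
  have hiw := integral_eq_lintegral_of_nonneg_ae hw0' hw.1
  have hUfin : (∫⁻ x, ENNReal.ofReal (u x) ∂μ) ≠ ⊤ :=
    ((hasFiniteIntegral_iff_ofReal hu0').1 hu.2).ne
  have hVfin : (∫⁻ x, ENNReal.ofReal (v x) ∂μ) ≠ ⊤ :=
    ((hasFiniteIntegral_iff_ofReal hv0').1 hv.2).ne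
  have key : (∫⁻ x, ENNReal.ofReal (w x) ∂μ)
      ≤ (∫⁻ x, ENNReal.ofReal (u x) ∂μ) ^ θ * (∫⁻ x, ENNReal.ofReal (v x) ∂μ) ^ (1 - θ) := by
    have heq : (∫⁻ x, ENNReal.ofReal (w x) ∂μ)
        = ∫⁻ x, (ENNReal.ofReal (u x)) ^ θ * (ENNReal.ofReal (v x)) ^ (1 - θ) ∂μ := by
      apply lintegral_congr_ae
      filter_upwards [hu0', hv0', hweq'] with x h1 h2 h3
      rw [h3, ENNReal.ofReal_mul (rpow_nonneg h1 _),
        ENNReal.ofReal_rpow_of_nonneg h1 hθ0.le,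
        ENNReal.ofReal_rpow_of_nonneg h2 (by linarith)]
    rw [heq]
    exact ENNReal.lintegral_mul_norm_pow_le hu.1.aemeasurable.ennreal_ofReal
      hv.1.aemeasurable.ennreal_ofReal hθ0.le (by linarith) (by ring)
  rw [hiw, hiu, hiv, ENNReal.toReal_rpow, ENNReal.toReal_rpow, ← ENNReal.toReal_mul]
  exact ENNReal.toReal_mono
    (ENNReal.mul_ne_top (ENNReal.rpow_ne_top_of_nonneg hθ0.le hUfin)
      (ENNReal.rpow_ne_top_of_nonneg (by linarith) hVfin)) key

/-- Combining two products of rpow's. -/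
lemma renyi_rpow_comb {F G : ℝ} (hF : 0 < F) (hG : 0 < G) (a1 b1 a2 b2 θ : ℝ) :
    (G ^ a1 * F ^ b1) ^ θ * (G ^ a2 * F ^ b2) ^ (1 - θ)
      = G ^ (a1 * θ + a2 * (1 - θ)) * F ^ (b1 * θ + b2 * (1 - θ)) := by
  rw [Real.mul_rpow (rpow_nonneg hG.le _) (rpow_nonneg hF.le _),
    Real.mul_rpow (rpow_nonneg hG.le _) (rpow_nonneg hF.le _),
    ← Real.rpow_mul hG.le, ← Real.rpow_mul hF.le,
    ← Real.rpow_mul hG.le, ← Real.rpow_mul hF.le,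
    mul_mul_mul_comm, ← Real.rpow_add hG, ← Real.rpow_add hF]

/-- Exponentiated form of the main Rényi inequality. -/
theorem renyi_ineq_exponentiated_form
    (c d α β : ℝ) (f g : ℝ → ℝ)
    (hcd : c < d)
    (hfpos : ∀ x ∈ Ioo c d, 0 < f x) (hgpos : ∀ x ∈ Ioo c d, 0 < g x)
    (hfdens : (∫ x in Ioo c d, f x) = 1) (hgdens : (∫ x in Ioo c d, g x) = 1)
    (hα : α ≠ 1) (hβ : β ≠ 1)
    (hcase : (β < 1 ∧ 1 < α) ∨ (β < α ∧ α < 1))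
    (hA : IntegrableOn (fun x => g x ^ ((1 - β) * (1 - α) / (β - α)) * f x) (Ioo c d))
    (hApos : 0 < ∫ x in Ioo c d, g x ^ ((1 - β) * (1 - α) / (β - α)) * f x)
    (hB : IntegrableOn (fun x => f x ^ α) (Ioo c d))
    (hBpos : 0 < ∫ x in Ioo c d, f x ^ α)
    (hC : IntegrableOn (fun x => g x ^ (1 - β) * f x ^ β) (Ioo c d))
    (hCpos : 0 < ∫ x in Ioo c d, g x ^ (1 - β) * f x ^ β) :
    (∫ x in Ioo c d, g x ^ ((1 - β) * (1 - α) / (β - α)) * f x)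
        ^ ((β - α) / ((1 - α) * (1 - β)))
      * (∫ x in Ioo c d, f x ^ α) ^ (1 - α)⁻¹
      ≤ (∫ x in Ioo c d, g x ^ (1 - β) * f x ^ β) ^ (1 - β)⁻¹ := by
  set A := ∫ x in Ioo c d, g x ^ ((1 - β) * (1 - α) / (β - α)) * f x with hAdef
  set B := ∫ x in Ioo c d, f x ^ α with hBdef
  set C := ∫ x in Ioo c d, g x ^ (1 - β) * f x ^ β with hCdef
  have hαβ : β < α := by rcases hcase with ⟨h1, h2⟩ | ⟨h1, h2⟩ <;> linarith
  have hαβ' : α - β ≠ 0 := by linarith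
  have hβα' : β - α ≠ 0 := by intro h; exact hαβ' (by linarith)
  have h1mα : (1:ℝ) - α ≠ 0 := fun h => hα (by linarith)
  have h1mβ : (1:ℝ) - β ≠ 0 := fun h => hβ (by linarith)
  rcases hcase with ⟨hβ1, hα1⟩ | ⟨hβα, hα1⟩
  · -- case β < 1 < α
    set θ : ℝ := (α - 1) / (α - β) with hθdef
    have hθ0 : 0 < θ := div_pos (by linarith) (by linarith)
    have hθ1 : θ < 1 := (div_lt_one (by linarith)).2 (by linarith)
    have hstep : A ≤ C ^ θ * B ^ (1 - θ) := by
      apply renyi_holder_pow_le measurableSet_Ioo hθ0 hθ1 hC hB hA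
      · intro x hx
        have := hfpos x hx; have := hgpos x hx; positivity
      · intro x hx
        have := hfpos x hx; positivity
      · intro x hx
        have hF := hfpos x hx; have hG := hgpos x hx
        have h0 : (f x ^ α : ℝ) = g x ^ (0:ℝ) * f x ^ α := by
          rw [Real.rpow_zero, one_mul]
        rw [h0, renyi_rpow_comb hF hG]
        have e1 : (1 - β) * θ + 0 * (1 - θ) = (1 - β) * (1 - α) / (β - α) := by
          rw [hθdef]; field_simp; ring
        have e2 : β * θ + α * (1 - θ) = 1 := by
          rw [hθdef]; field_simp; ring
        rw [e1, e2, Real.rpow_one]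
    -- raise to power e := (β-α)/((1-α)(1-β)) > 0
    set e : ℝ := (β - α) / ((1 - α) * (1 - β)) with hedef
    have he0 : 0 < e := div_pos_of_neg_of_neg (by linarith)
      (mul_neg_of_neg_of_pos (by linarith) (by linarith))
    have h1 : A ^ e ≤ (C ^ θ * B ^ (1 - θ)) ^ e :=
      Real.rpow_le_rpow hApos.le hstep he0.le
    have h2 : (C ^ θ * B ^ (1 - θ)) ^ e = C ^ (1 - β)⁻¹ * B ^ (-(1 - α)⁻¹) := by
      rw [Real.mul_rpow (rpow_nonneg hCpos.le _) (rpow_nonneg hBpos.le _),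
        ← Real.rpow_mul hCpos.le, ← Real.rpow_mul hBpos.le]
      congr 1
      · congr 1
        rw [hθdef, hedef]; field_simp; ring
      · congr 1
        rw [hθdef, hedef]; field_simp
        try ring
        try tauto
    calc A ^ e * B ^ (1 - α)⁻¹
        ≤ (C ^ (1 - β)⁻¹ * B ^ (-(1 - α)⁻¹)) * B ^ (1 - α)⁻¹ :=
          mul_le_mul_of_nonneg_right (h2 ▸ h1) (rpow_nonneg hBpos.le _)
      _ = C ^ (1 - β)⁻¹ := by
          rw [mul_assoc, ← Real.rpow_add hBpos]
          simp
  · -- case β < α < 1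
    set θ : ℝ := (1 - α) / (1 - β) with hθdef
    have hθ0 : 0 < θ := div_pos (by linarith) (by linarith)
    have hθ1 : θ < 1 := (div_lt_one (by linarith)).2 (by linarith)
    have hstep : B ≤ C ^ θ * A ^ (1 - θ) := by
      apply renyi_holder_pow_le measurableSet_Ioo hθ0 hθ1 hC hA hB
      · intro x hx
        have := hfpos x hx; have := hgpos x hx; positivity
      · intro x hx
        have := hfpos x hx; have := hgpos x hx; positivity
      · intro x hx
        have hF := hfpos x hx; have hG := hgpos x hx
        have h0 : g x ^ ((1 - β) * (1 - α) / (β - α)) * f x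
            = g x ^ ((1 - β) * (1 - α) / (β - α)) * f x ^ (1:ℝ) := by
          rw [Real.rpow_one]
        rw [h0, renyi_rpow_comb hF hG]
        have e1 : (1 - β) * θ + ((1 - β) * (1 - α) / (β - α)) * (1 - θ) = 0 := by
          rw [hθdef]; field_simp; ring
        have e2 : β * θ + 1 * (1 - θ) = α := by
          rw [hθdef]; field_simp; ring
        rw [e1, e2, Real.rpow_zero, one_mul]
    set e : ℝ := (β - α) / ((1 - α) * (1 - β)) with hedef
    have h1 : B ^ (1 - α)⁻¹ ≤ (C ^ θ * A ^ (1 - θ)) ^ (1 - α)⁻¹ :=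
      Real.rpow_le_rpow hBpos.le hstep (inv_nonneg.2 (by linarith))
    have h2 : (C ^ θ * A ^ (1 - θ)) ^ (1 - α)⁻¹ = C ^ (1 - β)⁻¹ * A ^ (-e) := by
      rw [Real.mul_rpow (rpow_nonneg hCpos.le _) (rpow_nonneg hApos.le _),
        ← Real.rpow_mul hCpos.le, ← Real.rpow_mul hApos.le]
      congr 1
      · congr 1
        rw [hθdef]; field_simp
      · congr 1
        rw [hθdef, hedef]; field_simp
        try ring
        try tauto
    calc A ^ e * B ^ (1 - α)⁻¹
        ≤ A ^ e * (C ^ (1 - β)⁻¹ * A ^ (-e)) :=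
          mul_le_mul_of_nonneg_left (h2 ▸ h1) (rpow_nonneg hApos.le _)
      _ = C ^ (1 - β)⁻¹ := by
          rw [mul_comm (C ^ (1 - β)⁻¹), ← mul_assoc, ← Real.rpow_add hApos]
          simp
end

section
/- Let f, g be positive probability densities on an interval Ω, let 𝒪 be a measure-preserving transformation with transformed density F(y) = 𝒪[f](x(y)) where y'(x) = f(x)/𝒪[f](x), and define the reciprocal transform G(y) = (g(x(y))/f(x(y)))·𝒪[f](x(y)) with the same change of variable. Then for every γ ∈ ℝ \ {1}, D_γ[F‖G] = D_γ[f‖g]. -/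
open MeasureTheory Real Set

/-- Invariance of the Rényi divergence under a measure-preserving transformation
and its reciprocal transformation (Proposition 3.1). -/
theorem renyi_divergence_invariance_under_reciprocal_transform
    (c d c' d' : ℝ) (f g Of xmap F G : ℝ → ℝ)
    (hcd : c < d) (hcd' : c' < d')
    (hfpos : ∀ t ∈ Ioo c d, 0 < f t) (hgpos : ∀ t ∈ Ioo c d, 0 < g t)
    (hfdens : (∫ t in Ioo c d, f t) = 1) (hgdens : (∫ t in Ioo c d, g t) = 1)
    (hOfpos : ∀ t ∈ Ioo c d, 0 < Of t)
    -- x(y) : the change of variable, mapping the new interval onto the old one,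
    -- with x'(y) = Of(x(y)) / f(x(y)), i.e. y'(x) = f(x)/Of(x)
    (hbij : Set.BijOn xmap (Ioo c' d') (Ioo c d))
    (hderiv : ∀ y ∈ Ioo c' d', HasDerivAt xmap (Of (xmap y) / f (xmap y)) y)
    -- F = O[f] and G = the reciprocal transform of g, as densities in the variable y
    (hF : ∀ y ∈ Ioo c' d', F y = Of (xmap y))
    (hG : ∀ y ∈ Ioo c' d', G y = g (xmap y) / f (xmap y) * Of (xmap y)) :
    ∀ γ : ℝ, γ ≠ 1 →
      IntegrableOn (fun y => F y ^ γ * G y ^ (1 - γ)) (Ioo c' d') →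
      IntegrableOn (fun t => f t ^ γ * g t ^ (1 - γ)) (Ioo c d) →
      (γ - 1)⁻¹ * log (∫ y in Ioo c' d', F y ^ γ * G y ^ (1 - γ))
        = (γ - 1)⁻¹ * log (∫ t in Ioo c d, f t ^ γ * g t ^ (1 - γ)) := by
  intro γ hγ _ _
  have hchange :
      (∫ t in Ioo c d, f t ^ γ * g t ^ (1 - γ))
        = ∫ y in Ioo c' d',
            |Of (xmap y) / f (xmap y)| • (f (xmap y) ^ γ * g (xmap y) ^ (1 - γ)) := by
    rw [← hbij.image_eq]
    exact MeasureTheory.integral_image_eq_integral_abs_deriv_smul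
      measurableSet_Ioo
      (fun y hy => (hderiv y hy).hasDerivWithinAt) hbij.injOn _
  have hcongr :
      (∫ y in Ioo c' d',
          |Of (xmap y) / f (xmap y)| • (f (xmap y) ^ γ * g (xmap y) ^ (1 - γ)))
        = ∫ y in Ioo c' d', F y ^ γ * G y ^ (1 - γ) := by
    refine setIntegral_congr_fun measurableSet_Ioo (fun y hy => ?_)
    have hx : xmap y ∈ Ioo c d := hbij.mapsTo hy
    have ha : 0 < Of (xmap y) := hOfpos _ hx
    have hb : 0 < f (xmap y) := hfpos _ hx
    have hc : 0 < g (xmap y) := hgpos _ hx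
    set a := Of (xmap y)
    set b := f (xmap y)
    set cc := g (xmap y)
    rw [hF y hy, hG y hy]
    have habs : |a / b| = a / b := abs_of_pos (div_pos ha hb)
    rw [smul_eq_mul, habs]
    have h1 : (cc / b * a) ^ (1 - γ) = cc ^ (1 - γ) / b ^ (1 - γ) * a ^ (1 - γ) := by
      rw [mul_rpow (div_pos hc hb).le ha.le, div_rpow hc.le hb.le]
    rw [h1]
    have h2 : a ^ γ * a ^ (1 - γ) = a := by
      rw [← rpow_add ha]; simp
    have h3 : b ^ γ * b ^ (1 - γ) = b := by
      rw [← rpow_add hb]; simp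
    field_simp
    show a * b ^ γ * b ^ (1 - γ)
        = b * a ^ γ * a ^ (1 - γ)
    linear_combination a * h3 - b * h2
  rw [hchange, hcongr]
end

section
/- Let f, g be positive probability densities on an interval, ξ ∈ ℝ, let f_ξ = 𝔈_ξ[f] be the differential-escort transform f_ξ(y) = f(x(y))^ξ with y'(x) = f(x)^{1−ξ}, and let Ḡ(y) = g(x(y)) f(x(y))^{ξ−1} be its reciprocal transform. Then for γ ≠ 1, H_γ[f_ξ ; Ḡ] = (1/(1−γ)) log ∫ f(x)^{1+(ξ−1)(γ−1)} g(x)^{γ−1} dx. -/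
open MeasureTheory Real Set

/-- Cross-entropy of the differential-escort transform and its reciprocal
transform (Lemma 3.3, Eq. for H_γ). -/
theorem cross_entropy_differential_escort
    (c d c' d' γ ξ : ℝ) (f g xmap fξ Gbar : ℝ → ℝ)
    (hcd : c < d) (hcd' : c' < d')
    (hfpos : ∀ t ∈ Ioo c d, 0 < f t) (hgpos : ∀ t ∈ Ioo c d, 0 < g t)
    (hfdens : (∫ t in Ioo c d, f t) = 1) (hgdens : (∫ t in Ioo c d, g t) = 1)
    (hγ : γ ≠ 1)
    -- x(y): inverse change of variable for the differential-escort transform,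
    -- with x'(y) = f(x(y))^(ξ-1), i.e. y'(x) = f(x)^(1-ξ)
    (hbij : Set.BijOn xmap (Ioo c' d') (Ioo c d))
    (hderiv : ∀ y ∈ Ioo c' d', HasDerivAt xmap (f (xmap y) ^ (ξ - 1)) y)
    (hfξ : ∀ y ∈ Ioo c' d', fξ y = f (xmap y) ^ ξ)
    (hGbar : ∀ y ∈ Ioo c' d', Gbar y = g (xmap y) * f (xmap y) ^ (ξ - 1))
    (hint : IntegrableOn (fun y => fξ y * Gbar y ^ (γ - 1)) (Ioo c' d'))
    (hint' : IntegrableOn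
      (fun t => f t ^ (1 + (ξ - 1) * (γ - 1)) * g t ^ (γ - 1)) (Ioo c d)) :
    (1 - γ)⁻¹ * log (∫ y in Ioo c' d', fξ y * Gbar y ^ (γ - 1))
      = (1 - γ)⁻¹ * log (∫ t in Ioo c d,
          f t ^ (1 + (ξ - 1) * (γ - 1)) * g t ^ (γ - 1)) := by
  have himg : xmap '' (Ioo c' d') = Ioo c d := hbij.image_eq
  have key : (∫ t in Ioo c d, f t ^ (1 + (ξ - 1) * (γ - 1)) * g t ^ (γ - 1))
      = ∫ y in Ioo c' d', fξ y * Gbar y ^ (γ - 1) := by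
    rw [← himg, integral_image_eq_integral_abs_deriv_smul measurableSet_Ioo
        (fun y hy => (hderiv y hy).hasDerivWithinAt) hbij.injOn]
    apply setIntegral_congr_fun measurableSet_Ioo
    intro y hy
    have hx := hbij.mapsTo hy
    have hf := hfpos _ hx
    have hg := hgpos _ hx
    simp only [smul_eq_mul]
    rw [hfξ y hy, hGbar y hy, abs_of_pos (rpow_pos_of_pos hf _),
      mul_rpow hg.le (rpow_pos_of_pos hf _).le, ← rpow_mul hf.le,
      ← mul_assoc, ← rpow_add hf, mul_comm (g (xmap y) ^ (γ - 1)),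
      ← mul_assoc, ← rpow_add hf]
    ring_nf
  rw [key]
end

section
/- For any differential-escort transform: if f is a positive probability density and ξ ∈ ℝ, then the Rényi entropy satisfies R_α[𝔈_ξ[f]] = ξ R_{1+(α−1)ξ}[f], where 𝔈_ξ[f](y) = f(x(y))^ξ with y'(x) = f(x)^{1−ξ}. -/
open MeasureTheory Real Set

/-- Rényi entropy scaling under the differential-escort transform:
R_α[𝔈_ξ[f]] = ξ·R_{1+(α-1)ξ}[f]. -/
theorem renyi_entropy_differential_escort_scaling
    (c d c' d' α ξ : ℝ) (f xmap F : ℝ → ℝ)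
    (hcd : c < d) (hcd' : c' < d')
    (hfpos : ∀ t ∈ Ioo c d, 0 < f t)
    (hfdens : (∫ t in Ioo c d, f t) = 1)
    (hα : α ≠ 1) (hα' : 1 + (α - 1) * ξ ≠ 1)
    -- x(y): inverse change of variable, x'(y) = f(x(y))^(ξ-1), i.e. y'(x) = f(x)^(1-ξ)
    (hbij : Set.BijOn xmap (Ioo c' d') (Ioo c d))
    (hderiv : ∀ y ∈ Ioo c' d', HasDerivAt xmap (f (xmap y) ^ (ξ - 1)) y)
    (hF : ∀ y ∈ Ioo c' d', F y = f (xmap y) ^ ξ)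
    (hint : IntegrableOn (fun y => F y ^ α) (Ioo c' d'))
    (hintpos : 0 < ∫ y in Ioo c' d', F y ^ α)
    (hint' : IntegrableOn (fun t => f t ^ (1 + (α - 1) * ξ)) (Ioo c d))
    (hint'pos : 0 < ∫ t in Ioo c d, f t ^ (1 + (α - 1) * ξ)) :
    (1 - α)⁻¹ * log (∫ y in Ioo c' d', F y ^ α)
      = ξ * ((1 - (1 + (α - 1) * ξ))⁻¹
          * log (∫ t in Ioo c d, f t ^ (1 + (α - 1) * ξ))) := by
  have hξ : ξ ≠ 0 := by
    intro h
    apply hα'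
    rw [h]; ring
  have hα1 : (1 : ℝ) - α ≠ 0 := sub_ne_zero.mpr (Ne.symm hα)
  -- integrals are equal
  have key : (∫ t in Ioo c d, f t ^ (1 + (α - 1) * ξ))
      = ∫ y in Ioo c' d', F y ^ α := by
    rw [← hbij.image_eq]
    rw [integral_image_eq_integral_abs_deriv_smul measurableSet_Ioo
      (fun y hy => (hderiv y hy).hasDerivWithinAt) hbij.injOn
      (fun t => f t ^ (1 + (α - 1) * ξ))]
    apply setIntegral_congr_fun measurableSet_Ioo
    intro y hy
    have hx : xmap y ∈ Ioo c d := hbij.mapsTo hy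
    have hf : 0 < f (xmap y) := hfpos _ hx
    have h1 : |f (xmap y) ^ (ξ - 1)| = f (xmap y) ^ (ξ - 1) :=
      abs_of_pos (rpow_pos_of_pos hf _)
    simp only [smul_eq_mul, h1, hF y hy]
    rw [← Real.rpow_add hf, ← Real.rpow_mul hf.le]
    congr 1; ring
  rw [key]
  have h2 : (1 : ℝ) - (1 + (α - 1) * ξ) = (1 - α) * ξ := by ring
  rw [h2]
  field_simp
end

section
/- For positive probability densities f, h on a common interval and a, b ∈ ℝ with a ≠ 1, b ≠ 1: H̃_{a,b}[f;h‖h] = (1−b)·D_{1+(a−1)(b−1)}[f‖h]; in particular H̃_{a,1}[f;h‖h] = 0. -/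
open MeasureTheory Real Set

/-- Cross-divergence particular case g = h: H̃_{a,b}[f;h‖h] = (1−b)·D_{1+(a−1)(b−1)}[f‖h];
in particular H̃_{a,1}[f;h‖h] = 0. -/
theorem cross_divergence_eq_reference
    (c d a b : ℝ) (f h : ℝ → ℝ)
    (hcd : c < d)
    (hfpos : ∀ x ∈ Ioo c d, 0 < f x) (hhpos : ∀ x ∈ Ioo c d, 0 < h x)
    (hfdens : (∫ x in Ioo c d, f x) = 1) (hhdens : (∫ x in Ioo c d, h x) = 1)
    (ha : a ≠ 1) (hb : b ≠ 1)
    (hint : IntegrableOn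
      (fun x => f x * (f x ^ (b - 1) * h x / h x ^ b) ^ (a - 1)) (Ioo c d))
    (hintpos : 0 < ∫ x in Ioo c d,
      f x * (f x ^ (b - 1) * h x / h x ^ b) ^ (a - 1))
    (hint' : IntegrableOn
      (fun x => f x ^ (1 + (a - 1) * (b - 1)) * h x ^ (1 - (1 + (a - 1) * (b - 1))))
      (Ioo c d))
    (hint'pos : 0 < ∫ x in Ioo c d,
      f x ^ (1 + (a - 1) * (b - 1)) * h x ^ (1 - (1 + (a - 1) * (b - 1))))
    (hint1 : IntegrableOn
      (fun x => f x * (f x ^ ((1 : ℝ) - 1) * h x / h x ^ (1 : ℝ)) ^ (a - 1)) (Ioo c d)) :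
    ((1 - a)⁻¹ * log (∫ x in Ioo c d,
        f x * (f x ^ (b - 1) * h x / h x ^ b) ^ (a - 1))
      = (1 - b) * (((1 + (a - 1) * (b - 1)) - 1)⁻¹ * log (∫ x in Ioo c d,
          f x ^ (1 + (a - 1) * (b - 1)) * h x ^ (1 - (1 + (a - 1) * (b - 1))))))
    ∧ ((1 - a)⁻¹ * log (∫ x in Ioo c d,
        f x * (f x ^ ((1 : ℝ) - 1) * h x / h x ^ (1 : ℝ)) ^ (a - 1)) = 0) := by
  have hEq : ∀ x ∈ Ioo c d,
      f x * (f x ^ (b - 1) * h x / h x ^ b) ^ (a - 1)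
        = f x ^ (1 + (a - 1) * (b - 1)) * h x ^ (1 - (1 + (a - 1) * (b - 1))) := by
    intro x hx
    have hf := hfpos x hx
    have hh := hhpos x hx
    have h1 : f x ^ (b - 1) * h x / h x ^ b = f x ^ (b - 1) * h x ^ (1 - b) := by
      rw [mul_div_assoc]
      congr 1
      rw [show h x / h x ^ b = h x ^ (1:ℝ) / h x ^ b by rw [Real.rpow_one],
        ← Real.rpow_sub hh]
    rw [h1, Real.mul_rpow (Real.rpow_nonneg hf.le _) (Real.rpow_nonneg hh.le _),
      ← Real.rpow_mul hf.le, ← Real.rpow_mul hh.le,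
      show (1 - (1 + (a - 1) * (b - 1))) = (1-b)*(a-1) by ring,
      show (1 + (a - 1) * (b - 1)) = 1 + (b-1)*(a-1) by ring,
      Real.rpow_add hf, Real.rpow_one]
    ring
  have hIeq : (∫ x in Ioo c d, f x * (f x ^ (b - 1) * h x / h x ^ b) ^ (a - 1))
      = ∫ x in Ioo c d, f x ^ (1 + (a - 1) * (b - 1)) * h x ^ (1 - (1 + (a - 1) * (b - 1))) :=
    setIntegral_congr_fun measurableSet_Ioo hEq
  constructor
  · rw [hIeq]
    rw [show ((1 + (a - 1) * (b - 1)) - 1) = (a-1)*(b-1) by ring, ← mul_assoc]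
    congr 1
    have ha' : a - 1 ≠ 0 := sub_ne_zero.mpr ha
    have hb' : b - 1 ≠ 0 := sub_ne_zero.mpr hb
    have ha'' : (1:ℝ) - a ≠ 0 := fun hz => ha' (by linarith [sub_eq_zero.mp hz])
    field_simp
    ring
  · have hEq1 : ∀ x ∈ Ioo c d,
        f x * (f x ^ ((1:ℝ) - 1) * h x / h x ^ (1:ℝ)) ^ (a - 1) = f x := by
      intro x hx
      have hh := hhpos x hx
      rw [sub_self, Real.rpow_zero, Real.rpow_one, one_mul, div_self hh.ne',
        Real.one_rpow, mul_one]
    rw [setIntegral_congr_fun measurableSet_Ioo hEq1, hfdens, Real.log_one, mul_zero]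
end

section
/- For positive probability densities f, g, h on a common interval and a ≠ 1, b ≠ 0, setting ā = 1 + b(1−a) and b̄ = 1/b (so ā ≠ 1): H̃_{a,b}[f;g‖h] = −b·H̃_{ā,b̄}[f;h‖g]. -/
open MeasureTheory Real Set

/-- Cross-divergence symmetry: H̃_{a,b}[f;g‖h] = −b·H̃_{ā,b̄}[f;h‖g]
with ā = 1 + b(1−a) and b̄ = 1/b. -/
theorem cross_divergence_symmetry
    (c d a b : ℝ) (f g h : ℝ → ℝ)
    (hcd : c < d)
    (hfpos : ∀ x ∈ Ioo c d, 0 < f x) (hgpos : ∀ x ∈ Ioo c d, 0 < g x)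
    (hhpos : ∀ x ∈ Ioo c d, 0 < h x)
    (hfdens : (∫ x in Ioo c d, f x) = 1) (hgdens : (∫ x in Ioo c d, g x) = 1)
    (hhdens : (∫ x in Ioo c d, h x) = 1)
    (ha : a ≠ 1) (hb : b ≠ 0)
    (hint : IntegrableOn
      (fun x => f x * (f x ^ (b - 1) * g x / h x ^ b) ^ (a - 1)) (Ioo c d))
    (hintpos : 0 < ∫ x in Ioo c d,
      f x * (f x ^ (b - 1) * g x / h x ^ b) ^ (a - 1))
    (hint' : IntegrableOn
      (fun x => f x * (f x ^ ((1 / b) - 1) * h x / g x ^ (1 / b))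
        ^ ((1 + b * (1 - a)) - 1)) (Ioo c d))
    (hint'pos : 0 < ∫ x in Ioo c d,
      f x * (f x ^ ((1 / b) - 1) * h x / g x ^ (1 / b)) ^ ((1 + b * (1 - a)) - 1)) :
    (1 - a)⁻¹ * log (∫ x in Ioo c d,
        f x * (f x ^ (b - 1) * g x / h x ^ b) ^ (a - 1))
      = -b * ((1 - (1 + b * (1 - a)))⁻¹ * log (∫ x in Ioo c d,
          f x * (f x ^ ((1 / b) - 1) * h x / g x ^ (1 / b))
            ^ ((1 + b * (1 - a)) - 1))) := by
  have hIeq : (∫ x in Ioo c d, f x * (f x ^ (b - 1) * g x / h x ^ b) ^ (a - 1))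
      = ∫ x in Ioo c d,
        f x * (f x ^ ((1 / b) - 1) * h x / g x ^ (1 / b)) ^ ((1 + b * (1 - a)) - 1) := by
    apply setIntegral_congr_fun measurableSet_Ioo
    intro x hx
    have hf := hfpos x hx
    have hg := hgpos x hx
    have hh := hhpos x hx
    have key : ∀ p q r : ℝ, 0 < p → 0 < q → 0 < r → ∀ s t u : ℝ,
        (p ^ s * q / r ^ t) ^ u = p ^ (s * u) * q ^ u / r ^ (t * u) := by
      intro p q r hp hq hr s t u
      rw [div_rpow (by positivity) (le_of_lt (rpow_pos_of_pos hr t)),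
        mul_rpow (le_of_lt (rpow_pos_of_pos hp s)) hq.le,
        ← rpow_mul hp.le, ← rpow_mul hr.le]
    dsimp only
    rw [key _ _ _ hf hg hh, key _ _ _ hf hh hg]
    have e1 : (1 / b - 1) * (1 + b * (1 - a) - 1) = (b - 1) * (a - 1) := by
      field_simp; ring
    have e2 : (1 + b * (1 - a) - 1 : ℝ) = -(b * (a - 1)) := by ring
    have e3 : (1 / b * -(b * (a - 1)) : ℝ) = -(a - 1) := by
      field_simp
    rw [e1, e2, e3, rpow_neg hh.le, rpow_neg hg.le]
    field_simp
  rw [hIeq]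
  have h1a : (1 : ℝ) - a ≠ 0 := sub_ne_zero.mpr (Ne.symm ha)
  have : (1 - (1 + b * (1 - a))) = -b * (1 - a) := by ring
  rw [this]
  field_simp
end
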